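/- Compositionality of typing with respect to contexts: suppose Π' ⊢ G'[·] : ⟨φ',Λ'⟩ is derivable in the type system extended by the axiom Π ⊢ [·] : ⟨φ,Λ⟩ for the hole. Then for every ground g-choreography G such that Π ⊢ G : ⟨φ,Λ⟩ is derivable, the judgement Π' ⊢ G'[G] : ⟨φ',Λ'⟩ is derivable, and consequently ⟦G'[G]⟧ ≠ ⊥. -/

import Mathlib

/-!
Filling the hole is an induction on the typing derivation of the context: each context rule is
the corresponding typing rule with the derivation for the hole replaced by the one for `G`.

Definedness of `⟦G'[G]⟧` is soundness of the type system. By induction on a derivation of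
`Π ⊢ G : ⟨φ, Λ⟩`, the semantics `⟦G⟧` is a finite event structure `E` whose labels have exactly
the subjects `Π`, whose projection `E↾A` has `φ̂(A)` as labels of its minimal events, which has a
maximal configuration, and each of whose maximal configurations involves every participant of
`Π`. The subject condition makes the label sets of parallel branches disjoint, and the condition
on minimal labels turns `compch` into well-branchedness. For `G1;G2` the last condition computes
the minimal events: when `A ∈ Π1`, every maximal configuration of `⟦G1⟧` that a copy of `⟦G2⟧`
is glued to already has an `A`-event, which lies below the `A`-events of the copy, so the
minimal `A`-events are those of `⟦G1⟧`; this is the `φ1 ∪ (φ2 − Π1)` of rule t-seq.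
-/

open scoped Classical

namespace Choreo

/-! ## Labels -/

/-- Communication labels: output `A B!m` and input `A B?m`. -/
inductive Label (P M : Type) where
  | out : P → P → M → Label P M
  | inp : P → P → M → Label P M

variable {P M : Type}

/-- The subject of a label: the sender of an output, the receiver of an input. -/
def Label.sbj : Label P M → P
  | .out a _ _ => a
  | .inp _ b _ => b

/-- The set `L^!` of output labels (sender and receiver distinct). -/
def Lout : Set (Label P M) := {l | ∃ a b m, a ≠ b ∧ l = .out a b m}

/-- The set `L^?` of input labels (sender and receiver distinct). -/
def Lin : Set (Label P M) := {l | ∃ a b m, a ≠ b ∧ l = .inp a b m}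

/-- `L̂(A)`: the labels in `L` whose subject is `A`. -/
def hat (L : Set (Label P M)) (A : P) : Set (Label P M) := {l ∈ L | l.sbj = A}

/-- `sbj(L)`: the set of subjects of the labels in `L`. -/
def sbjSet (L : Set (Label P M)) : Set P := Label.sbj '' L

/-- `L − Π`: the labels in `L` whose subject is not in `Π`. -/
def lminus (L : Set (Label P M)) (Γ : Set P) : Set (Label P M) := {l ∈ L | l.sbj ∉ Γ}

/-! ## Labelled event structures (events drawn from ℕ) -/

/-- Data of a labelled (prime) event structure over events drawn from `ℕ`. -/
structure ES (P M : Type) where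
  ev : Set ℕ
  le : ℕ → ℕ → Prop
  conf : ℕ → ℕ → Prop
  lbl : ℕ → Label P M

namespace ES

variable (E : ES P M)

/-- Configurations: downward-closed conflict-free sets of events. -/
def Config (x : Set ℕ) : Prop :=
  x ⊆ E.ev ∧ (∀ e ∈ x, ∀ f ∈ E.ev, E.le f e → f ∈ x) ∧
    ∀ e ∈ x, ∀ f ∈ x, ¬ E.conf e f

/-- `MaxC E`: the ⊆-maximal configurations of `E`. -/
def MaxC : Set (Set ℕ) := {x | E.Config x ∧ ∀ y, E.Config y → x ⊆ y → y = x}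

/-- Minimal events of `s ⊆ E.ev` with respect to `E.le`. -/
def minIn (s : Set ℕ) : Set ℕ := {e ∈ s | ∀ f ∈ s, E.le f e → f = e}

/-- Maximal events of `s ⊆ E.ev` with respect to `E.le`. -/
def maxIn (s : Set ℕ) : Set ℕ := {e ∈ s | ∀ f ∈ s, E.le e f → f = e}

def minEv : Set ℕ := E.minIn E.ev
def maxEv : Set ℕ := E.maxIn E.ev

/-- Labels of the minimal events of `E`. -/
def minLbl : Set (Label P M) := E.lbl '' E.minEv

/-- Labels of the maximal events of `E`. -/
def maxLbl : Set (Label P M) := E.lbl '' E.maxEv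

/-- All labels occurring in `E`. -/
def lblSet : Set (Label P M) := E.lbl '' E.ev

/-- The projection `E↾A`: the restriction of `E` to the events whose label has subject `A`. -/
def proj (A : P) : ES P M where
  ev := {e ∈ E.ev | (E.lbl e).sbj = A}
  le u v := E.le u v ∧ (u ∈ E.ev ∧ (E.lbl u).sbj = A) ∧ (v ∈ E.ev ∧ (E.lbl v).sbj = A)
  conf u v := E.conf u v ∧ (u ∈ E.ev ∧ (E.lbl u).sbj = A) ∧ (v ∈ E.ev ∧ (E.lbl v).sbj = A)
  lbl := E.lbl

/-- The projection `x↾A` of a configuration (as a set of events of `E`). -/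
def projC (x : Set ℕ) (A : P) : Set ℕ := {e ∈ x | (E.lbl e).sbj = A}

end ES

/-! ## Constructions on event structures -/

/-- Tag for the events of a left component. -/
def tagL (e : ℕ) : ℕ := Nat.pair 0 e
/-- Tag for the events of a right component. -/
def tagR (e : ℕ) : ℕ := Nat.pair 1 e
/-- Tag for the events of the copy of the second component indexed by (the code of) a
maximal configuration of the first one. -/
def tagC (k e : ℕ) : ℕ := Nat.pair 1 (Nat.pair k e)

/-- A code (injective on finite sets) of sets of naturals. -/
noncomputable def encSet (x : Set ℕ) : ℕ :=
  if h : x.Finite then h.toFinset.sum (fun n => 2 ^ n) else 0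

/-- The empty event structure `ε`. -/
noncomputable def esEmpty [Nonempty P] [Nonempty M] : ES P M where
  ev := ∅
  le _ _ := False
  conf _ _ := False
  lbl _ := Label.out Classical.ofNonempty Classical.ofNonempty Classical.ofNonempty

/-- `⟦A→B:m⟧`: two ordered events labelled `A B!m < A B?m`. -/
def esAct (a b : P) (m : M) : ES P M where
  ev := {0, 1}
  le u v := (u = 0 ∧ v = 0) ∨ (u = 0 ∧ v = 1) ∨ (u = 1 ∧ v = 1)
  conf _ _ := False
  lbl e := if e = 0 then Label.out a b m else Label.inp a b m

/-- Tensor product `E1 ⊗ E2` (componentwise disjoint union). -/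
def esTensor (E1 E2 : ES P M) : ES P M where
  ev := (tagL '' E1.ev) ∪ (tagR '' E2.ev)
  le u v := (∃ e ∈ E1.ev, ∃ f ∈ E1.ev, E1.le e f ∧ u = tagL e ∧ v = tagL f) ∨
            (∃ e ∈ E2.ev, ∃ f ∈ E2.ev, E2.le e f ∧ u = tagR e ∧ v = tagR f)
  conf u v := (∃ e ∈ E1.ev, ∃ f ∈ E1.ev, E1.conf e f ∧ u = tagL e ∧ v = tagL f) ∨
              (∃ e ∈ E2.ev, ∃ f ∈ E2.ev, E2.conf e f ∧ u = tagR e ∧ v = tagR f)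
  lbl u := if (Nat.unpair u).1 = 0 then E1.lbl (Nat.unpair u).2 else E2.lbl (Nat.unpair u).2

/-- Sum `E1 + E2`: disjoint union with all cross pairs of events in conflict. -/
def esSum (E1 E2 : ES P M) : ES P M :=
  { esTensor E1 E2 with
    conf := fun u v => (esTensor E1 E2).conf u v ∨
      (∃ e ∈ E1.ev, ∃ f ∈ E2.ev, (u = tagL e ∧ v = tagR f) ∨ (u = tagR f ∧ v = tagL e)) }

/-- Sequential composition: appends to each maximal configuration `x` of `E1` a disjoint
copy of `E2`, ordering an event of `x` below an event of the copy whenever their labels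
have the same subject. -/
noncomputable def esSeq (E1 E2 : ES P M) : ES P M where
  ev := (tagL '' E1.ev) ∪ {u | ∃ x ∈ E1.MaxC, ∃ e ∈ E2.ev, u = tagC (encSet x) e}
  le u v :=
    (∃ e ∈ E1.ev, ∃ f ∈ E1.ev, E1.le e f ∧ u = tagL e ∧ v = tagL f) ∨
    (∃ x ∈ E1.MaxC, ∃ e ∈ E2.ev, ∃ f ∈ E2.ev, E2.le e f ∧
       u = tagC (encSet x) e ∧ v = tagC (encSet x) f) ∨
    (∃ x ∈ E1.MaxC, ∃ e ∈ x, ∃ f ∈ E2.ev, (E1.lbl e).sbj = (E2.lbl f).sbj ∧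
       u = tagL e ∧ v = tagC (encSet x) f)
  conf u v :=
    (∃ e ∈ E1.ev, ∃ f ∈ E1.ev, E1.conf e f ∧ u = tagL e ∧ v = tagL f) ∨
    (∃ x ∈ E1.MaxC, ∃ e ∈ E2.ev, ∃ f ∈ E2.ev, E2.conf e f ∧
       u = tagC (encSet x) e ∧ v = tagC (encSet x) f) ∨
    (∃ x ∈ E1.MaxC, ∃ x' ∈ E1.MaxC, x ≠ x' ∧ ∃ e ∈ E2.ev, ∃ f ∈ E2.ev,
       u = tagC (encSet x) e ∧ v = tagC (encSet x') f) ∨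
    (∃ x ∈ E1.MaxC, ∃ e ∈ E1.ev, (∃ e' ∈ x, E1.conf e e') ∧ ∃ f ∈ E2.ev,
       ((u = tagL e ∧ v = tagC (encSet x) f) ∨ (u = tagC (encSet x) f ∧ v = tagL e)))
  lbl u := if (Nat.unpair u).1 = 0 then E1.lbl (Nat.unpair u).2
           else E2.lbl (Nat.unpair (Nat.unpair u).2).2

/-! ## Well-branchedness -/

/-- Labels of the minimal events of the projection `E↾A`. -/
def minLblP (E : ES P M) (A : P) : Set (Label P M) := (E.proj A).minLbl

/-- `A` is active for the branches `E1`, `E2`. -/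
def active (E1 E2 : ES P M) (A : P) : Prop :=
  minLblP E1 A ≠ ∅ ∧ minLblP E2 A ≠ ∅ ∧
  Disjoint (minLblP E1 A) (minLblP E2 A) ∧
  minLblP E1 A ∪ minLblP E2 A ⊆ Lout

/-- `B` is passive for the branches `E1`, `E2`. -/
def passive (E1 E2 : ES P M) (B : P) : Prop :=
  Disjoint (minLblP E1 B) (minLblP E2 B) ∧
  minLblP E1 B ∪ minLblP E2 B ⊆ Lin ∧
  (minLblP E1 B = ∅ ↔ minLblP E2 B = ∅)

/-- Well-branchedness: a unique active participant, all other participants passive. -/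
def wb (E1 E2 : ES P M) : Prop :=
  ∃ A, active E1 E2 A ∧ (∀ A', active E1 E2 A' → A' = A) ∧
    ∀ B, B ≠ A → passive E1 E2 B

/-! ## Ground g-choreographies and their semantics -/

/-- Ground g-choreographies: `G ::= 0 | A→B:m | G;G | G|G | G+G`. -/
inductive GC (P M : Type) where
  | nil : GC P M
  | act : P → P → M → GC P M
  | seq : GC P M → GC P M → GC P M
  | par : GC P M → GC P M → GC P M
  | cho : GC P M → GC P M → GC P M

/-- `P(G)`: the participants occurring in `G`. -/
def parts : GC P M → Set P
  | .nil => ∅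
  | .act a b _ => {a, b}
  | .seq g1 g2 => parts g1 ∪ parts g2
  | .par g1 g2 => parts g1 ∪ parts g2
  | .cho g1 g2 => parts g1 ∪ parts g2

/-- The semantics `⟦G⟧`: a labelled event structure, or `none` (i.e. `⊥`) when a side
condition fails (the grammar requires `A ≠ B` in interactions; parallel requires disjoint
label sets; choice requires well-branchedness). -/
noncomputable def gsem [Nonempty P] [Nonempty M] : GC P M → Option (ES P M)
  | .nil => some esEmpty
  | .act a b m => if a = b then none else some (esAct a b m)
  | .seq g1 g2 =>
      match gsem g1, gsem g2 with
      | some E1, some E2 => some (esSeq E1 E2)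
      | _, _ => none
  | .par g1 g2 =>
      match gsem g1, gsem g2 with
      | some E1, some E2 =>
          if Disjoint E1.lblSet E2.lblSet then some (esTensor E1 E2) else none
      | _, _ => none
  | .cho g1 g2 =>
      match gsem g1, gsem g2 with
      | some E1, some E2 => if wb E1 E2 then some (esSum E1 E2) else none
      | _, _ => none

/-! ## The typing system -/

/-- Output uniform sets of labels. -/
def outUniform (U V : Set (Label P M)) : Prop := Disjoint U V ∧ U ∪ V ⊆ Lout

/-- Input uniform sets of labels. -/
def inUniform (U V : Set (Label P M)) : Prop := Disjoint U V ∧ U ∪ V ⊆ Lin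

/-- The compatibility condition `compch(φ1,φ2,Π)` of rule t-ch. -/
def compch (φ1 φ2 : Set (Label P M)) (Γ : Set P) : Prop :=
  ∃ A ∈ Γ,
    (outUniform (hat φ1 A) (hat φ2 A) ∧ hat φ1 A ≠ ∅ ∧ hat φ2 A ≠ ∅) ∧
    (∀ A' ∈ Γ, (outUniform (hat φ1 A') (hat φ2 A') ∧ hat φ1 A' ≠ ∅ ∧ hat φ2 A' ≠ ∅) →
        A' = A) ∧
    ∀ B ∈ Γ, B ≠ A →
      inUniform (hat φ1 B) (hat φ2 B) ∧ (hat φ1 B = ∅ ↔ hat φ2 B = ∅)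

/-- The typing judgement `Π ⊢ G : ⟨φ,Λ⟩`. -/
inductive Typing : Set P → GC P M → Set (Label P M) → Set (Label P M) → Prop where
  | temp : Typing ∅ GC.nil ∅ ∅
  | tint {a b : P} {m : M} (hab : a ≠ b) :
      Typing {a, b} (GC.act a b m)
        {Label.out a b m, Label.inp a b m} {Label.out a b m, Label.inp a b m}
  | tseq {Γ1 Γ2 : Set P} {g1 g2 : GC P M} {φ1 φ2 Λ1 Λ2 : Set (Label P M)} :
      Typing Γ1 g1 φ1 Λ1 → Typing Γ2 g2 φ2 Λ2 →
      Typing (Γ1 ∪ Γ2) (GC.seq g1 g2) (φ1 ∪ lminus φ2 Γ1) (Λ2 ∪ lminus Λ1 Γ2)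
  | tpar {Γ1 Γ2 : Set P} {g1 g2 : GC P M} {φ1 φ2 Λ1 Λ2 : Set (Label P M)} :
      Typing Γ1 g1 φ1 Λ1 → Typing Γ2 g2 φ2 Λ2 → Γ1 ∩ Γ2 = ∅ →
      Typing (Γ1 ∪ Γ2) (GC.par g1 g2) (φ1 ∪ φ2) (Λ1 ∪ Λ2)
  | tch {Γ : Set P} {g1 g2 : GC P M} {φ1 φ2 Λ1 Λ2 : Set (Label P M)} :
      Typing Γ g1 φ1 Λ1 → Typing Γ g2 φ2 Λ2 → compch φ1 φ2 Γ →
      Typing Γ (GC.cho g1 g2) (φ1 ∪ φ2) (Λ1 ∪ Λ2)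


/-! ## One-hole contexts and their typing (hole axiom `Γh ⊢ [·] : ⟨φh,Λh⟩`) -/

/-- g-choreography contexts with a single hole. -/
inductive Ctx (P M : Type) where
  | hole : Ctx P M
  | seqL : Ctx P M → GC P M → Ctx P M
  | seqR : GC P M → Ctx P M → Ctx P M
  | parL : Ctx P M → GC P M → Ctx P M
  | parR : GC P M → Ctx P M → Ctx P M
  | choL : Ctx P M → GC P M → Ctx P M
  | choR : GC P M → Ctx P M → Ctx P M

/-- `C.fill g = C[g]`, the replacement of the hole of `C` by `g`. -/
def Ctx.fill : Ctx P M → GC P M → GC P M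
  | .hole, g => g
  | .seqL c g2, g => GC.seq (c.fill g) g2
  | .seqR g1 c, g => GC.seq g1 (c.fill g)
  | .parL c g2, g => GC.par (c.fill g) g2
  | .parR g1 c, g => GC.par g1 (c.fill g)
  | .choL c g2, g => GC.cho (c.fill g) g2
  | .choR g1 c, g => GC.cho g1 (c.fill g)

/-- Typing of one-hole contexts in the type system extended with the axiom
`Γh ⊢ [·] : ⟨φh,Λh⟩` for the hole. -/
inductive CTyping (Γh : Set P) (φh Λh : Set (Label P M)) :
    Set P → Ctx P M → Set (Label P M) → Set (Label P M) → Prop where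
  | hole : CTyping Γh φh Λh Γh Ctx.hole φh Λh
  | seqL {Γ1 Γ2 : Set P} {c : Ctx P M} {g : GC P M} {φ1 φ2 Λ1 Λ2 : Set (Label P M)} :
      CTyping Γh φh Λh Γ1 c φ1 Λ1 → Typing Γ2 g φ2 Λ2 →
      CTyping Γh φh Λh (Γ1 ∪ Γ2) (Ctx.seqL c g) (φ1 ∪ lminus φ2 Γ1) (Λ2 ∪ lminus Λ1 Γ2)
  | seqR {Γ1 Γ2 : Set P} {g : GC P M} {c : Ctx P M} {φ1 φ2 Λ1 Λ2 : Set (Label P M)} :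
      Typing Γ1 g φ1 Λ1 → CTyping Γh φh Λh Γ2 c φ2 Λ2 →
      CTyping Γh φh Λh (Γ1 ∪ Γ2) (Ctx.seqR g c) (φ1 ∪ lminus φ2 Γ1) (Λ2 ∪ lminus Λ1 Γ2)
  | parL {Γ1 Γ2 : Set P} {c : Ctx P M} {g : GC P M} {φ1 φ2 Λ1 Λ2 : Set (Label P M)} :
      CTyping Γh φh Λh Γ1 c φ1 Λ1 → Typing Γ2 g φ2 Λ2 → Γ1 ∩ Γ2 = ∅ →
      CTyping Γh φh Λh (Γ1 ∪ Γ2) (Ctx.parL c g) (φ1 ∪ φ2) (Λ1 ∪ Λ2)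
  | parR {Γ1 Γ2 : Set P} {g : GC P M} {c : Ctx P M} {φ1 φ2 Λ1 Λ2 : Set (Label P M)} :
      Typing Γ1 g φ1 Λ1 → CTyping Γh φh Λh Γ2 c φ2 Λ2 → Γ1 ∩ Γ2 = ∅ →
      CTyping Γh φh Λh (Γ1 ∪ Γ2) (Ctx.parR g c) (φ1 ∪ φ2) (Λ1 ∪ Λ2)
  | choL {Γ : Set P} {c : Ctx P M} {g : GC P M} {φ1 φ2 Λ1 Λ2 : Set (Label P M)} :
      CTyping Γh φh Λh Γ c φ1 Λ1 → Typing Γ g φ2 Λ2 → compch φ1 φ2 Γ →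
      CTyping Γh φh Λh Γ (Ctx.choL c g) (φ1 ∪ φ2) (Λ1 ∪ Λ2)
  | choR {Γ : Set P} {g : GC P M} {c : Ctx P M} {φ1 φ2 Λ1 Λ2 : Set (Label P M)} :
      Typing Γ g φ1 Λ1 → CTyping Γh φh Λh Γ c φ2 Λ2 → compch φ1 φ2 Γ →
      CTyping Γh φh Λh Γ (Ctx.choR g c) (φ1 ∪ φ2) (Λ1 ∪ Λ2)

/-! ## Refinable actions, t-ref, and refinement -/

/-- The three side conditions of the axiom schema t-ref for the refinable action
`A → m1…mn : B1,…,Bn`, represented by the initiator `A` and the nonempty list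
`l = [(m1,B1),…,(mn,Bn)]` with pairwise distinct `Bi`. -/
def trefCond (Γ : Set P) (φ Λ : Set (Label P M)) (A : P) (l : List (M × P)) : Prop :=
  l ≠ [] ∧ (l.map Prod.snd).Nodup ∧
  sbjSet φ = Γ ∧ sbjSet Λ = Γ ∧ sbjSet (φ ∩ Lout) = {A} ∧
  ∀ p ∈ l, ∃ C ∈ Γ, hat Λ p.2 = {Label.inp C p.2 p.1}

/-- `G ref A→m1…mn:B1,…,Bn`: the ground g-choreography `G` refines the refinable action
given by initiator `A` and list `l = [(m1,B1),…,(mn,Bn)]`. -/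
def Refines [Nonempty P] [Nonempty M] (G : GC P M) (A : P) (l : List (M × P)) : Prop :=
  ∃ E : ES P M, gsem G = some E ∧
    sbjSet E.minLbl = {A} ∧
    ∀ x ∈ E.MaxC, ∀ p ∈ l, ∃ C ∈ parts G,
      Label.inp C p.2 p.1 ∈ E.lbl '' (E.maxIn (E.projC x p.2))

/-! ## Multi-hole contexts -/

/-- g-choreography contexts with (numbered) holes. -/
inductive MCtx (P M : Type) where
  | hole : ℕ → MCtx P M
  | nil : MCtx P M
  | act : P → P → M → MCtx P M
  | seq : MCtx P M → MCtx P M → MCtx P M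
  | par : MCtx P M → MCtx P M → MCtx P M
  | cho : MCtx P M → MCtx P M → MCtx P M

/-- The (indices of the) holes occurring in a multi-hole context. -/
def MCtx.holes : MCtx P M → List ℕ
  | .hole i => [i]
  | .nil => []
  | .act _ _ _ => []
  | .seq c1 c2 => c1.holes ++ c2.holes
  | .par c1 c2 => c1.holes ++ c2.holes
  | .cho c1 c2 => c1.holes ++ c2.holes

/-- `C.fill g`: replace each hole `[·]i` by `g i`. -/
def MCtx.fill : MCtx P M → (ℕ → GC P M) → GC P M
  | .hole i, g => g i
  | .nil, _ => GC.nil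
  | .act a b m, _ => GC.act a b m
  | .seq c1 c2, g => GC.seq (c1.fill g) (c2.fill g)
  | .par c1 c2, g => GC.par (c1.fill g) (c2.fill g)
  | .cho c1 c2, g => GC.cho (c1.fill g) (c2.fill g)

/-- Typing of multi-hole contexts in the extended type system, where hole `i` is typed by
the axiom `(σ i).1 ⊢ [·]i : ⟨(σ i).2.1, (σ i).2.2⟩`. -/
inductive MTyping (σ : ℕ → Set P × Set (Label P M) × Set (Label P M)) :
    Set P → MCtx P M → Set (Label P M) → Set (Label P M) → Prop where
  | hole (i : ℕ) : MTyping σ (σ i).1 (MCtx.hole i) (σ i).2.1 (σ i).2.2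
  | temp : MTyping σ ∅ MCtx.nil ∅ ∅
  | tint {a b : P} {m : M} (hab : a ≠ b) :
      MTyping σ {a, b} (MCtx.act a b m)
        {Label.out a b m, Label.inp a b m} {Label.out a b m, Label.inp a b m}
  | tseq {Γ1 Γ2 : Set P} {c1 c2 : MCtx P M} {φ1 φ2 Λ1 Λ2 : Set (Label P M)} :
      MTyping σ Γ1 c1 φ1 Λ1 → MTyping σ Γ2 c2 φ2 Λ2 →
      MTyping σ (Γ1 ∪ Γ2) (MCtx.seq c1 c2) (φ1 ∪ lminus φ2 Γ1) (Λ2 ∪ lminus Λ1 Γ2)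
  | tpar {Γ1 Γ2 : Set P} {c1 c2 : MCtx P M} {φ1 φ2 Λ1 Λ2 : Set (Label P M)} :
      MTyping σ Γ1 c1 φ1 Λ1 → MTyping σ Γ2 c2 φ2 Λ2 → Γ1 ∩ Γ2 = ∅ →
      MTyping σ (Γ1 ∪ Γ2) (MCtx.par c1 c2) (φ1 ∪ φ2) (Λ1 ∪ Λ2)
  | tch {Γ : Set P} {c1 c2 : MCtx P M} {φ1 φ2 Λ1 Λ2 : Set (Label P M)} :
      MTyping σ Γ c1 φ1 Λ1 → MTyping σ Γ c2 φ2 Λ2 → compch φ1 φ2 Γ →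
      MTyping σ Γ (MCtx.cho c1 c2) (φ1 ∪ φ2) (Λ1 ∪ Λ2)

@[simp] lemma tagL_inj {a b : ℕ} : tagL a = tagL b ↔ a = b := by simp [tagL]
@[simp] lemma tagR_inj {a b : ℕ} : tagR a = tagR b ↔ a = b := by simp [tagR]
@[simp] lemma tagC_inj {k e k' e' : ℕ} : tagC k e = tagC k' e' ↔ k = k' ∧ e = e' := by
  simp [tagC]
@[simp] lemma tagL_ne_tagR (a b : ℕ) : tagL a ≠ tagR b := by simp [tagL, tagR]
@[simp] lemma tagR_ne_tagL (a b : ℕ) : tagR a ≠ tagL b := (tagL_ne_tagR b a).symm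
@[simp] lemma tagL_ne_tagC (a k b : ℕ) : tagL a ≠ tagC k b := by simp [tagL, tagC]
@[simp] lemma tagC_ne_tagL (a k b : ℕ) : tagC k b ≠ tagL a := (tagL_ne_tagC a k b).symm

lemma tagL_injective : Function.Injective tagL := fun _ _ => tagL_inj.1
lemma tagR_injective : Function.Injective tagR := fun _ _ => tagR_inj.1

@[simp] lemma preimage_tagL_image_tagL (x : Set ℕ) : tagL ⁻¹' (tagL '' x) = x :=
  tagL_injective.preimage_image x
@[simp] lemma preimage_tagR_image_tagR (x : Set ℕ) : tagR ⁻¹' (tagR '' x) = x :=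
  tagR_injective.preimage_image x
@[simp] lemma preimage_tagL_image_tagR (x : Set ℕ) : tagL ⁻¹' (tagR '' x) = ∅ := by
  ext; simp
@[simp] lemma preimage_tagR_image_tagL (x : Set ℕ) : tagR ⁻¹' (tagL '' x) = ∅ := by
  ext; simp

lemma encSet_injOn_finite : Set.InjOn encSet {x : Set ℕ | x.Finite} := by
  intro x (hx : x.Finite) y (hy : y.Finite) h
  simp only [encSet, dif_pos hx, dif_pos hy] at h
  rw [← hx.coe_toFinset, ← hy.coe_toFinset, ← Finset.toFinset_bitIndices_sum_two_pow hx.toFinset,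
    h, Finset.toFinset_bitIndices_sum_two_pow]

lemma hat_union (s t : Set (Label P M)) (A : P) : hat (s ∪ t) A = hat s A ∪ hat t A :=
  Set.sep_union

lemma hat_lminus_of_mem (φ : Set (Label P M)) {Γ : Set P} {A : P} (hA : A ∈ Γ) :
    hat (lminus φ Γ) A = ∅ := by
  ext l
  simp only [hat, lminus, Set.mem_ofPred_eq, Set.mem_empty_iff_false, iff_false, not_and]
  rintro ⟨-, hl⟩ rfl
  exact hl hA

lemma hat_lminus_of_notMem (φ : Set (Label P M)) {Γ : Set P} {A : P} (hA : A ∉ Γ) :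
    hat (lminus φ Γ) A = hat φ A := by
  ext l
  simp only [hat, lminus, Set.mem_ofPred_eq]
  exact ⟨fun ⟨⟨hl, _⟩, hlA⟩ => ⟨hl, hlA⟩, fun ⟨hl, hlA⟩ => ⟨⟨hl, hlA ▸ hA⟩, hlA⟩⟩

lemma sbjSet_union (s t : Set (Label P M)) : sbjSet (s ∪ t) = sbjSet s ∪ sbjSet t :=
  Set.image_union _ _ _

namespace ES

variable {E : ES P M} {x : Set ℕ} {A : P}

lemma Config.subset_ev (h : E.Config x) : x ⊆ E.ev := h.1

lemma Config.mem_of_le (h : E.Config x) {e f : ℕ} (he : e ∈ x) (hf : f ∈ E.ev)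
    (hfe : E.le f e) : f ∈ x :=
  h.2.1 e he f hf hfe

lemma Config.not_conf (h : E.Config x) {e f : ℕ} (he : e ∈ x) (hf : f ∈ x) : ¬ E.conf e f :=
  h.2.2 e he f hf

lemma config_empty : E.Config ∅ := by simp [Config]

lemma Config.union {y : Set ℕ} (hx : E.Config x) (hy : E.Config y)
    (hxy : ∀ e ∈ x, ∀ f ∈ y, ¬ E.conf e f ∧ ¬ E.conf f e) : E.Config (x ∪ y) := by
  refine ⟨Set.union_subset hx.subset_ev hy.subset_ev, ?_, ?_⟩
  · rintro e (he | he) f hf hfe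
    exacts [Or.inl (hx.mem_of_le he hf hfe), Or.inr (hy.mem_of_le he hf hfe)]
  · rintro e (he | he) f (hf | hf)
    exacts [hx.not_conf he hf, (hxy e he f hf).1, (hxy f hf e he).2, hy.not_conf he hf]

lemma encSet_eq_encSet_iff (hfin : E.ev.Finite) (hx : x ∈ E.MaxC) {y : Set ℕ}
    (hy : y ∈ E.MaxC) : encSet x = encSet y ↔ x = y :=
  encSet_injOn_finite.eq_iff (hfin.subset hx.1.subset_ev) (hfin.subset hy.1.subset_ev)

lemma mem_minEv_proj {e : ℕ} :
    e ∈ (E.proj A).minEv ↔ e ∈ E.ev ∧ (E.lbl e).sbj = A ∧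
      ∀ f ∈ E.ev, (E.lbl f).sbj = A → E.le f e → f = e := by
  simp only [minEv, minIn, proj, Set.mem_ofPred_eq]
  constructor
  · rintro ⟨⟨he, hA⟩, hmin⟩
    exact ⟨he, hA, fun f hf hfA hfe => hmin f ⟨hf, hfA⟩ ⟨hfe, ⟨hf, hfA⟩, he, hA⟩⟩
  · rintro ⟨he, hA, hmin⟩
    exact ⟨⟨he, hA⟩, fun f hf hfe => hmin f hf.1 hf.2 hfe.1⟩

lemma map_mem_minEv_proj_iff {E F : ES P M} {A : P} {ι : ℕ → ℕ} (hι : ι.Injective)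
    (hlbl : ∀ e, F.lbl (ι e) = E.lbl e) (hev : ∀ e, ι e ∈ F.ev ↔ e ∈ E.ev)
    (hle : ∀ e ∈ E.ev, ∀ f ∈ E.ev, F.le (ι f) (ι e) ↔ E.le f e)
    (hdown : ∀ e ∈ E.ev, ∀ u ∈ F.ev, (F.lbl u).sbj = A → F.le u (ι e) → u ∈ ι '' E.ev)
    {e : ℕ} : ι e ∈ (F.proj A).minEv ↔ e ∈ (E.proj A).minEv := by
  simp only [mem_minEv_proj, hlbl, hev]
  refine and_congr_right fun he => and_congr_right fun _ => ⟨fun hmin f hf hfA hfe => ?_, ?_⟩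
  · exact hι (hmin _ ((hev f).2 hf) (by rwa [hlbl]) ((hle e he f hf).2 hfe))
  · rintro hmin u hu huA hue
    obtain ⟨f, hf, rfl⟩ := hdown e he u hu huA hue
    rw [hmin f hf (by rwa [← hlbl]) ((hle e he f hf).1 hue)]

end ES

lemma minLblP_eq_image (E : ES P M) (A : P) : minLblP E A = E.lbl '' (E.proj A).minEv := rfl

/-- Finiteness makes `encSet` injective on maximal configurations, so that the copies of the
second component in `esSeq` are indexed faithfully; symmetry of conflict is used to describe the
maximal configurations of `esSeq`. -/
structure Realizes (Γ : Set P) (φ : Set (Label P M)) (E : ES P M) : Prop where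
  finite_ev : E.ev.Finite
  sbjSet_lblSet : sbjSet E.lblSet = Γ
  minLblP_eq_hat : ∀ A, minLblP E A = hat φ A
  maxC_nonempty : E.MaxC.Nonempty
  exists_sbj_eq_of_mem_maxC : ∀ A ∈ Γ, ∀ x ∈ E.MaxC, ∃ e ∈ x, (E.lbl e).sbj = A
  conf_symm : ∀ u v, E.conf u v → E.conf v u

namespace Realizes

variable {Γ : Set P} {φ : Set (Label P M)} {E : ES P M}

lemma sbj_mem (h : Realizes Γ φ E) {e : ℕ} (he : e ∈ E.ev) : (E.lbl e).sbj ∈ Γ :=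
  h.sbjSet_lblSet ▸ ⟨E.lbl e, ⟨e, he, rfl⟩, rfl⟩

lemma hat_eq_empty (h : Realizes Γ φ E) {A : P} (hA : A ∉ Γ) : hat φ A = ∅ := by
  rw [← h.minLblP_eq_hat, minLblP_eq_image, Set.image_eq_empty, Set.eq_empty_iff_forall_notMem]
  intro e hmin
  obtain ⟨he, rfl, -⟩ := ES.mem_minEv_proj.1 hmin
  exact hA (h.sbj_mem he)

lemma nonempty_or_ev_eq_empty (h : Realizes Γ φ E) {x : Set ℕ} (hx : x ∈ E.MaxC) :
    x.Nonempty ∨ E.ev = ∅ := by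
  refine E.ev.eq_empty_or_nonempty.symm.imp (fun ⟨e, he⟩ => ?_) id
  obtain ⟨f, hf, -⟩ := h.exists_sbj_eq_of_mem_maxC _ (h.sbj_mem he) x hx
  exact ⟨f, hf⟩

lemma disjoint_lblSet {Γ' : Set P} {φ' : Set (Label P M)} {E' : ES P M} (h : Realizes Γ φ E)
    (h' : Realizes Γ' φ' E') (hΓ : Γ ∩ Γ' = ∅) : Disjoint E.lblSet E'.lblSet := by
  rw [Set.disjoint_left]
  rintro l ⟨e, he, rfl⟩ ⟨e', he', hl⟩
  have := h'.sbj_mem he'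
  rw [hl] at this
  exact hΓ.subset ⟨h.sbj_mem he, this⟩

end Realizes

lemma realizes_esEmpty [Nonempty P] [Nonempty M] :
    Realizes (∅ : Set P) (∅ : Set (Label P M)) esEmpty := by
  refine ⟨Set.finite_empty, by simp [sbjSet, ES.lblSet, esEmpty], fun A => ?_, ⟨∅, ?_⟩,
    by simp, fun _ _ h => h⟩
  · simp [minLblP_eq_image, ES.mem_minEv_proj, esEmpty, hat, Set.eq_empty_iff_forall_notMem]
  · exact ⟨by simp [ES.Config, esEmpty], fun y hy _ => Set.subset_empty_iff.1 hy.subset_ev⟩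

lemma maxC_esAct {a b : P} {m : M} : (esAct a b m).MaxC = {{0, 1}} := by
  have hcfg : (esAct a b m).Config {0, 1} := ⟨subset_rfl, fun _ _ f hf _ => hf, fun _ _ _ _ h => h⟩
  ext z
  exact ⟨fun hz => (hz.2 _ hcfg hz.1.subset_ev).symm,
    fun hz => hz ▸ ⟨hcfg, fun y hy hsub => hy.subset_ev.antisymm hsub⟩⟩

lemma realizes_esAct {a b : P} (m : M) (hab : a ≠ b) :
    Realizes {a, b} {Label.out a b m, Label.inp a b m} (esAct a b m) := by
  refine ⟨by simp [esAct], ?_, fun A => ?_, ⟨{0, 1}, by simp [maxC_esAct]⟩, ?_, fun _ _ h => h⟩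
  · simp [sbjSet, ES.lblSet, esAct, Set.image_insert_eq, Label.sbj]
  · ext l
    simp [minLblP_eq_image, ES.mem_minEv_proj, esAct, hat, or_and_right, exists_or]
    aesop
  · simp only [maxC_esAct, Set.mem_singleton_iff, forall_eq]
    simp [esAct, Label.sbj]

section Tensor

variable {E1 E2 : ES P M} {a b : ℕ}

@[simp] lemma esTensor_ev : (esTensor E1 E2).ev = tagL '' E1.ev ∪ tagR '' E2.ev := rfl

@[simp] lemma esTensor_lbl_tagL : (esTensor E1 E2).lbl (tagL a) = E1.lbl a := by
  simp [esTensor, tagL]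
@[simp] lemma esTensor_lbl_tagR : (esTensor E1 E2).lbl (tagR a) = E2.lbl a := by
  simp [esTensor, tagR]

@[simp] lemma esTensor_le_tagL_tagL :
    (esTensor E1 E2).le (tagL a) (tagL b) ↔ a ∈ E1.ev ∧ b ∈ E1.ev ∧ E1.le a b := by
  simp [esTensor]
@[simp] lemma esTensor_le_tagR_tagR :
    (esTensor E1 E2).le (tagR a) (tagR b) ↔ a ∈ E2.ev ∧ b ∈ E2.ev ∧ E2.le a b := by
  simp [esTensor]
@[simp] lemma esTensor_not_le_tagL_tagR : ¬ (esTensor E1 E2).le (tagL a) (tagR b) := by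
  simp [esTensor]
@[simp] lemma esTensor_not_le_tagR_tagL : ¬ (esTensor E1 E2).le (tagR a) (tagL b) := by
  simp [esTensor]

@[simp] lemma esTensor_conf_tagL_tagL :
    (esTensor E1 E2).conf (tagL a) (tagL b) ↔ a ∈ E1.ev ∧ b ∈ E1.ev ∧ E1.conf a b := by
  simp [esTensor]
@[simp] lemma esTensor_conf_tagR_tagR :
    (esTensor E1 E2).conf (tagR a) (tagR b) ↔ a ∈ E2.ev ∧ b ∈ E2.ev ∧ E2.conf a b := by
  simp [esTensor]
@[simp] lemma esTensor_not_conf_tagL_tagR : ¬ (esTensor E1 E2).conf (tagL a) (tagR b) := by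
  simp [esTensor]
@[simp] lemma esTensor_not_conf_tagR_tagL : ¬ (esTensor E1 E2).conf (tagR a) (tagL b) := by
  simp [esTensor]

lemma config_esTensor_image_union {x y : Set ℕ} :
    (esTensor E1 E2).Config (tagL '' x ∪ tagR '' y) ↔ E1.Config x ∧ E2.Config y := by
  simp only [ES.Config, esTensor_ev]
  simp [or_imp, forall_and, Set.subset_def]
  aesop

lemma exists_eq_image_union_of_subset_esTensor_ev {z : Set ℕ}
    (hz : z ⊆ (esTensor E1 E2).ev) : ∃ x y, z = tagL '' x ∪ tagR '' y := by
  refine ⟨tagL ⁻¹' z, tagR ⁻¹' z, subset_antisymm (fun u hu => ?_) (by simp)⟩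
  rcases hz hu with ⟨e, -, rfl⟩ | ⟨e, -, rfl⟩
  exacts [Or.inl ⟨e, hu, rfl⟩, Or.inr ⟨e, hu, rfl⟩]

lemma image_tagL_union_image_tagR_subset_iff {x y x' y' : Set ℕ} :
    tagL '' x ∪ tagR '' y ⊆ tagL '' x' ∪ tagR '' y' ↔ x ⊆ x' ∧ y ⊆ y' := by
  simp [Set.union_subset_iff, Set.image_subset_iff]

lemma mem_maxC_esTensor {z : Set ℕ} :
    z ∈ (esTensor E1 E2).MaxC ↔ ∃ x ∈ E1.MaxC, ∃ y ∈ E2.MaxC, z = tagL '' x ∪ tagR '' y := by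
  constructor
  · rintro ⟨hz, hmax⟩
    obtain ⟨x, y, rfl⟩ := exists_eq_image_union_of_subset_esTensor_ev hz.subset_ev
    obtain ⟨hx, hy⟩ := config_esTensor_image_union.1 hz
    refine ⟨x, ⟨hx, fun x' hx' hsub => ?_⟩, y, ⟨hy, fun y' hy' hsub => ?_⟩, rfl⟩
    · have := hmax _ (config_esTensor_image_union.2 ⟨hx', hy⟩)
        (image_tagL_union_image_tagR_subset_iff.2 ⟨hsub, subset_rfl⟩)
      exact hsub.antisymm' (image_tagL_union_image_tagR_subset_iff.1 this.le).1
    · have := hmax _ (config_esTensor_image_union.2 ⟨hx, hy'⟩)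
        (image_tagL_union_image_tagR_subset_iff.2 ⟨subset_rfl, hsub⟩)
      exact hsub.antisymm' (image_tagL_union_image_tagR_subset_iff.1 this.le).2
  · rintro ⟨x, hx, y, hy, rfl⟩
    refine ⟨config_esTensor_image_union.2 ⟨hx.1, hy.1⟩, fun z hz hsub => ?_⟩
    obtain ⟨x', y', rfl⟩ := exists_eq_image_union_of_subset_esTensor_ev hz.subset_ev
    obtain ⟨hx', hy'⟩ := config_esTensor_image_union.1 hz
    obtain ⟨hxx', hyy'⟩ := image_tagL_union_image_tagR_subset_iff.1 hsub
    rw [hx.2 x' hx' hxx', hy.2 y' hy' hyy']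

lemma lblSet_esTensor : (esTensor E1 E2).lblSet = E1.lblSet ∪ E2.lblSet := by
  simp [ES.lblSet, Set.image_union, Set.image_image]

lemma tagL_mem_minEv_proj_esTensor_iff {A : P} :
    tagL a ∈ ((esTensor E1 E2).proj A).minEv ↔ a ∈ (E1.proj A).minEv := by
  refine ES.map_mem_minEv_proj_iff tagL_injective (fun _ => esTensor_lbl_tagL) (by simp)
    (by simp +contextual) ?_
  rintro e - _ (⟨f, hf, rfl⟩ | ⟨f, -, rfl⟩) - hle
  exacts [⟨f, hf, rfl⟩, absurd hle esTensor_not_le_tagR_tagL]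

lemma tagR_mem_minEv_proj_esTensor_iff {A : P} :
    tagR a ∈ ((esTensor E1 E2).proj A).minEv ↔ a ∈ (E2.proj A).minEv := by
  refine ES.map_mem_minEv_proj_iff tagR_injective (fun _ => esTensor_lbl_tagR) (by simp)
    (by simp +contextual) ?_
  rintro e - _ (⟨f, -, rfl⟩ | ⟨f, hf, rfl⟩) - hle
  exacts [absurd hle esTensor_not_le_tagL_tagR, ⟨f, hf, rfl⟩]

lemma minLblP_esTensor (A : P) :
    minLblP (esTensor E1 E2) A = minLblP E1 A ∪ minLblP E2 A := by
  have hmin : ((esTensor E1 E2).proj A).minEv =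
      tagL '' (E1.proj A).minEv ∪ tagR '' (E2.proj A).minEv := by
    ext u
    constructor
    · intro hu
      rcases (ES.mem_minEv_proj.1 hu).1 with ⟨e, -, rfl⟩ | ⟨e, -, rfl⟩
      exacts [Or.inl ⟨e, tagL_mem_minEv_proj_esTensor_iff.1 hu, rfl⟩,
        Or.inr ⟨e, tagR_mem_minEv_proj_esTensor_iff.1 hu, rfl⟩]
    · rintro (⟨e, he, rfl⟩ | ⟨e, he, rfl⟩)
      exacts [tagL_mem_minEv_proj_esTensor_iff.2 he, tagR_mem_minEv_proj_esTensor_iff.2 he]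
  simp [minLblP_eq_image, hmin, Set.image_union, Set.image_image]

lemma Realizes.esTensor {Γ1 Γ2 : Set P} {φ1 φ2 : Set (Label P M)}
    (h1 : Realizes Γ1 φ1 E1) (h2 : Realizes Γ2 φ2 E2) :
    Realizes (Γ1 ∪ Γ2) (φ1 ∪ φ2) (esTensor E1 E2) := by
  obtain ⟨x, hx⟩ := h1.maxC_nonempty
  obtain ⟨y, hy⟩ := h2.maxC_nonempty
  refine ⟨(h1.finite_ev.image _).union (h2.finite_ev.image _), ?_, fun A => ?_,
    ⟨_, mem_maxC_esTensor.2 ⟨x, hx, y, hy, rfl⟩⟩, ?_, ?_⟩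
  · rw [lblSet_esTensor, sbjSet, Set.image_union, ← sbjSet, ← sbjSet, h1.sbjSet_lblSet,
      h2.sbjSet_lblSet]
  · rw [minLblP_esTensor, h1.minLblP_eq_hat, h2.minLblP_eq_hat, hat_union]
  · intro A hA z hz
    obtain ⟨x, hx, y, hy, rfl⟩ := mem_maxC_esTensor.1 hz
    rcases hA with hA | hA
    · obtain ⟨e, he, hsbj⟩ := h1.exists_sbj_eq_of_mem_maxC A hA x hx
      exact ⟨tagL e, Or.inl ⟨e, he, rfl⟩, by simpa⟩
    · obtain ⟨e, he, hsbj⟩ := h2.exists_sbj_eq_of_mem_maxC A hA y hy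
      exact ⟨tagR e, Or.inr ⟨e, he, rfl⟩, by simpa⟩
  · rintro u v (⟨a, ha, b, hb, hab, rfl, rfl⟩ | ⟨a, ha, b, hb, hab, rfl, rfl⟩)
    · simpa [ha, hb] using h1.conf_symm _ _ hab
    · simpa [ha, hb] using h2.conf_symm _ _ hab

end Tensor

section Sum

variable {E1 E2 : ES P M} {a b : ℕ}

@[simp] lemma esSum_ev : (esSum E1 E2).ev = tagL '' E1.ev ∪ tagR '' E2.ev := rfl
@[simp] lemma esSum_lbl : (esSum E1 E2).lbl = (esTensor E1 E2).lbl := rfl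

@[simp] lemma esSum_conf_tagL_tagR :
    (esSum E1 E2).conf (tagL a) (tagR b) ↔ a ∈ E1.ev ∧ b ∈ E2.ev := by
  simp [esSum]
@[simp] lemma esSum_conf_tagR_tagL :
    (esSum E1 E2).conf (tagR a) (tagL b) ↔ b ∈ E1.ev ∧ a ∈ E2.ev := by
  simp [esSum]

lemma config_esSum_iff {z : Set ℕ} :
    (esSum E1 E2).Config z ↔
      (esTensor E1 E2).Config z ∧ ∀ a, tagL a ∈ z → ∀ b, tagR b ∈ z → False := by
  constructor
  · intro hz
    refine ⟨⟨hz.1, hz.2.1, fun u hu v hv h => hz.not_conf hu hv (Or.inl h)⟩, fun a ha b hb => ?_⟩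
    have ha' : a ∈ E1.ev := by simpa using hz.subset_ev ha
    have hb' : b ∈ E2.ev := by simpa using hz.subset_ev hb
    exact hz.not_conf ha hb (esSum_conf_tagL_tagR.2 ⟨ha', hb'⟩)
  · rintro ⟨hz, hcross⟩
    refine ⟨hz.1, hz.2.1, ?_⟩
    rintro u hu v hv (h | ⟨a, -, b, -, ⟨rfl, rfl⟩ | ⟨rfl, rfl⟩⟩)
    exacts [hz.not_conf hu hv h, hcross a hu b hv, hcross a hv b hu]

lemma config_esSum_image_union {x y : Set ℕ} :
    (esSum E1 E2).Config (tagL '' x ∪ tagR '' y) ↔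
      E1.Config x ∧ E2.Config y ∧ (x = ∅ ∨ y = ∅) := by
  rw [config_esSum_iff, config_esTensor_image_union, and_assoc]
  simp [Set.eq_empty_iff_forall_notMem, or_iff_not_imp_left]

lemma mem_maxC_esSum_tagL {x : Set ℕ} (hx : x ∈ E1.MaxC) (hx' : x.Nonempty ∨ E2.ev = ∅) :
    tagL '' x ∈ (esSum E1 E2).MaxC := by
  have hcfg := config_esSum_image_union (E2 := E2).2 ⟨hx.1, ES.config_empty, Or.inr rfl⟩
  rw [Set.image_empty, Set.union_empty] at hcfg
  refine ⟨hcfg, fun z hz hsub => ?_⟩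
  obtain ⟨x', y', rfl⟩ := exists_eq_image_union_of_subset_esTensor_ev hz.subset_ev
  obtain ⟨hx'', hy', hempty⟩ := config_esSum_image_union.1 hz
  have hxx' : x ⊆ x' := by simpa [Set.image_subset_iff] using hsub
  have hy'0 : y' = ∅ := by
    rcases hx' with ⟨e, he⟩ | hE2
    · exact hempty.resolve_left (Set.nonempty_iff_ne_empty.1 ⟨e, hxx' he⟩)
    · exact Set.subset_empty_iff.1 (hE2 ▸ hy'.subset_ev)
  rw [hy'0, hx.2 x' hx'' hxx', Set.image_empty, Set.union_empty]

lemma mem_maxC_esSum_tagR {y : Set ℕ} (hy : y ∈ E2.MaxC) (hy' : y.Nonempty ∨ E1.ev = ∅) :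
    tagR '' y ∈ (esSum E1 E2).MaxC := by
  have hcfg := config_esSum_image_union (E1 := E1).2 ⟨ES.config_empty, hy.1, Or.inl rfl⟩
  rw [Set.image_empty, Set.empty_union] at hcfg
  refine ⟨hcfg, fun z hz hsub => ?_⟩
  obtain ⟨x', y', rfl⟩ := exists_eq_image_union_of_subset_esTensor_ev hz.subset_ev
  obtain ⟨hx', hy'', hempty⟩ := config_esSum_image_union.1 hz
  have hyy' : y ⊆ y' := by simpa [Set.image_subset_iff] using hsub
  have hx'0 : x' = ∅ := by
    rcases hy' with ⟨e, he⟩ | hE1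
    · exact hempty.resolve_right (Set.nonempty_iff_ne_empty.1 ⟨e, hyy' he⟩)
    · exact Set.subset_empty_iff.1 (hE1 ▸ hx'.subset_ev)
  rw [hx'0, hy.2 y' hy'' hyy', Set.image_empty, Set.empty_union]

lemma mem_maxC_esSum_cases {z : Set ℕ} (hz : z ∈ (esSum E1 E2).MaxC) :
    (∃ x ∈ E1.MaxC, z = tagL '' x) ∨ (∃ y ∈ E2.MaxC, z = tagR '' y) := by
  obtain ⟨hzc, hmax⟩ := hz
  obtain ⟨x, y, rfl⟩ := exists_eq_image_union_of_subset_esTensor_ev hzc.subset_ev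
  obtain ⟨hx, hy, rfl | rfl⟩ := config_esSum_image_union.1 hzc
  · refine Or.inr ⟨y, ⟨hy, fun y' hy' hsub => hsub.antisymm' ?_⟩, by simp⟩
    have := hmax _ (config_esSum_image_union.2 ⟨hx, hy', Or.inl rfl⟩)
      (image_tagL_union_image_tagR_subset_iff.2 ⟨subset_rfl, hsub⟩)
    exact (image_tagL_union_image_tagR_subset_iff.1 this.le).2
  · refine Or.inl ⟨x, ⟨hx, fun x' hx' hsub => hsub.antisymm' ?_⟩, by simp⟩
    have := hmax _ (config_esSum_image_union.2 ⟨hx', hy, Or.inr rfl⟩)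
      (image_tagL_union_image_tagR_subset_iff.2 ⟨hsub, subset_rfl⟩)
    exact (image_tagL_union_image_tagR_subset_iff.1 this.le).1

lemma Realizes.esSum {Γ : Set P} {φ1 φ2 : Set (Label P M)}
    (h1 : Realizes Γ φ1 E1) (h2 : Realizes Γ φ2 E2) :
    Realizes Γ (φ1 ∪ φ2) (esSum E1 E2) := by
  -- `esSum` differs from `esTensor` only in its conflict relation
  have hT := h1.esTensor h2
  rw [Set.union_self] at hT
  obtain ⟨x, hx⟩ := h1.maxC_nonempty
  obtain ⟨y, hy⟩ := h2.maxC_nonempty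
  refine ⟨hT.finite_ev, hT.sbjSet_lblSet, hT.minLblP_eq_hat, ?_, ?_, ?_⟩
  · rcases h1.nonempty_or_ev_eq_empty hx with hx' | hE1
    exacts [⟨_, mem_maxC_esSum_tagL hx (Or.inl hx')⟩, ⟨_, mem_maxC_esSum_tagR hy (Or.inr hE1)⟩]
  · intro A hA z hz
    rcases mem_maxC_esSum_cases hz with ⟨x, hx, rfl⟩ | ⟨y, hy, rfl⟩
    · obtain ⟨e, he, hsbj⟩ := h1.exists_sbj_eq_of_mem_maxC A hA x hx
      exact ⟨tagL e, ⟨e, he, rfl⟩, by simpa⟩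
    · obtain ⟨e, he, hsbj⟩ := h2.exists_sbj_eq_of_mem_maxC A hA y hy
      exact ⟨tagR e, ⟨e, he, rfl⟩, by simpa⟩
  · rintro u v (huv | ⟨a, ha, b, hb, ⟨rfl, rfl⟩ | ⟨rfl, rfl⟩⟩)
    · exact Or.inl (hT.conf_symm u v huv)
    all_goals simp [ha, hb]

lemma wb_of_compch {Γ : Set P} {φ1 φ2 : Set (Label P M)}
    (h1 : Realizes Γ φ1 E1) (h2 : Realizes Γ φ2 E2) (hc : compch φ1 φ2 Γ) : wb E1 E2 := by
  simp only [wb, active, passive, h1.minLblP_eq_hat, h2.minLblP_eq_hat]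
  obtain ⟨A, -, ⟨⟨hdisj, hout⟩, hne1, hne2⟩, huniq, hpass⟩ := hc
  refine ⟨A, ⟨hne1, hne2, hdisj, hout⟩, fun A' ⟨hne1', hne2', hdisj', hout'⟩ => ?_, fun B hB => ?_⟩
  · by_cases hA' : A' ∈ Γ
    · exact huniq A' hA' ⟨⟨hdisj', hout'⟩, hne1', hne2'⟩
    · exact absurd (h1.hat_eq_empty hA') hne1'
  · by_cases hB' : B ∈ Γ
    · obtain ⟨⟨hd, hin⟩, hiff⟩ := hpass B hB' hB
      exact ⟨hd, hin, hiff⟩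
    · simp [h1.hat_eq_empty hB', h2.hat_eq_empty hB']

end Sum

section Seq

variable {E1 E2 : ES P M} {a b k : ℕ} {x x' : Set ℕ}

@[simp] lemma esSeq_lbl_tagL : (esSeq E1 E2).lbl (tagL a) = E1.lbl a := by
  simp [esSeq, tagL]
@[simp] lemma esSeq_lbl_tagC : (esSeq E1 E2).lbl (tagC k a) = E2.lbl a := by
  simp [esSeq, tagC]

lemma mem_esSeq_ev {u : ℕ} : u ∈ (esSeq E1 E2).ev ↔
    (∃ e ∈ E1.ev, u = tagL e) ∨ ∃ x ∈ E1.MaxC, ∃ f ∈ E2.ev, u = tagC (encSet x) f := by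
  simp [esSeq, eq_comm]

@[simp] lemma tagL_mem_esSeq_ev : tagL a ∈ (esSeq E1 E2).ev ↔ a ∈ E1.ev := by
  simp [mem_esSeq_ev]

lemma tagC_mem_esSeq_ev (hx : x ∈ E1.MaxC) : tagC (encSet x) a ∈ (esSeq E1 E2).ev ↔ a ∈ E2.ev := by
  simp only [mem_esSeq_ev, tagC_ne_tagL, tagC_inj]
  aesop

@[simp] lemma esSeq_le_tagL_tagL :
    (esSeq E1 E2).le (tagL a) (tagL b) ↔ a ∈ E1.ev ∧ b ∈ E1.ev ∧ E1.le a b := by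
  simp [esSeq]
@[simp] lemma esSeq_not_le_tagC_tagL : ¬ (esSeq E1 E2).le (tagC k a) (tagL b) := by
  simp [esSeq]
@[simp] lemma esSeq_conf_tagL_tagL :
    (esSeq E1 E2).conf (tagL a) (tagL b) ↔ a ∈ E1.ev ∧ b ∈ E1.ev ∧ E1.conf a b := by
  simp [esSeq]

lemma esSeq_le_tagC_tagC (hfin : E1.ev.Finite) (hx : x ∈ E1.MaxC) (hx' : x' ∈ E1.MaxC) :
    (esSeq E1 E2).le (tagC (encSet x') a) (tagC (encSet x) b) ↔
      x' = x ∧ a ∈ E2.ev ∧ b ∈ E2.ev ∧ E2.le a b := by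
  simp only [esSeq, tagC_ne_tagL, tagC_inj, false_and, and_false, exists_false, or_false, false_or]
  constructor
  · rintro ⟨w, hw, a, ha, b, hb, hab, ⟨hx'w, rfl⟩, hxw, rfl⟩
    rw [ES.encSet_eq_encSet_iff hfin hx' hw] at hx'w
    rw [ES.encSet_eq_encSet_iff hfin hx hw] at hxw
    exact ⟨hx'w.trans hxw.symm, ha, hb, hab⟩
  · rintro ⟨rfl, ha, hb, hab⟩
    exact ⟨x', hx', a, ha, b, hb, hab, ⟨rfl, rfl⟩, rfl, rfl⟩

lemma esSeq_le_tagL_tagC (hfin : E1.ev.Finite) (hx : x ∈ E1.MaxC) :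
    (esSeq E1 E2).le (tagL a) (tagC (encSet x) b) ↔
      a ∈ x ∧ b ∈ E2.ev ∧ (E1.lbl a).sbj = (E2.lbl b).sbj := by
  simp only [esSeq, tagL_ne_tagC, tagC_ne_tagL, tagL_inj, tagC_inj, false_and, and_false,
    exists_false, false_or]
  constructor
  · rintro ⟨w, hw, a, ha, b, hb, hab, rfl, hxw, rfl⟩
    rw [ES.encSet_eq_encSet_iff hfin hx hw] at hxw
    exact ⟨hxw ▸ ha, hb, hab⟩
  · rintro ⟨ha, hb, hab⟩
    exact ⟨x, hx, a, ha, b, hb, hab, rfl, rfl, rfl⟩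

lemma esSeq_conf_tagC_tagC (hfin : E1.ev.Finite) (hx : x ∈ E1.MaxC) (hx' : x' ∈ E1.MaxC) :
    (esSeq E1 E2).conf (tagC (encSet x) a) (tagC (encSet x') b) ↔
      a ∈ E2.ev ∧ b ∈ E2.ev ∧ (x ≠ x' ∨ E2.conf a b) := by
  simp only [esSeq, tagC_ne_tagL, tagC_inj, false_and, and_false,
    exists_false, or_false, false_or]
  constructor
  · rintro (⟨w, hw, a, ha, b, hb, hab, ⟨hxw, rfl⟩, hx'w, rfl⟩ |
      ⟨w, hw, w', hw', hww', a, ha, b, hb, ⟨hxw, rfl⟩, hx'w, rfl⟩)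
    · exact ⟨ha, hb, Or.inr hab⟩
    · rw [ES.encSet_eq_encSet_iff hfin hx hw] at hxw
      rw [ES.encSet_eq_encSet_iff hfin hx' hw'] at hx'w
      exact ⟨ha, hb, Or.inl (hxw ▸ hx'w ▸ hww')⟩
  · rintro ⟨ha, hb, hxx' | hab⟩
    · exact Or.inr ⟨x, hx, x', hx', hxx', a, ha, b, hb, ⟨rfl, rfl⟩, rfl, rfl⟩
    · by_cases hxx' : x = x'
      · subst hxx'
        exact Or.inl ⟨x, hx, a, ha, b, hb, hab, ⟨rfl, rfl⟩, rfl, rfl⟩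
      · exact Or.inr ⟨x, hx, x', hx', hxx', a, ha, b, hb, ⟨rfl, rfl⟩, rfl, rfl⟩

lemma esSeq_conf_tagL_tagC (hfin : E1.ev.Finite) (hx : x ∈ E1.MaxC) :
    (esSeq E1 E2).conf (tagL a) (tagC (encSet x) b) ↔
      a ∈ E1.ev ∧ (∃ e ∈ x, E1.conf a e) ∧ b ∈ E2.ev := by
  simp only [esSeq, tagL_ne_tagC, tagC_ne_tagL, tagL_inj, tagC_inj, false_and, and_false,
    exists_false, or_false, false_or]
  constructor
  · rintro ⟨w, hw, a, ha, hcf, b, hb, rfl, hxw, rfl⟩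
    rw [ES.encSet_eq_encSet_iff hfin hx hw] at hxw
    exact ⟨ha, hxw ▸ hcf, hb⟩
  · rintro ⟨ha, hcf, hb⟩
    exact ⟨x, hx, a, ha, hcf, b, hb, rfl, rfl, rfl⟩

lemma esSeq_conf_tagC_tagL (hfin : E1.ev.Finite) (hx : x ∈ E1.MaxC) :
    (esSeq E1 E2).conf (tagC (encSet x) b) (tagL a) ↔
      a ∈ E1.ev ∧ (∃ e ∈ x, E1.conf a e) ∧ b ∈ E2.ev := by
  simp only [esSeq, tagL_ne_tagC, tagC_ne_tagL, tagL_inj, tagC_inj, false_and, and_false,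
    exists_false, false_or]
  constructor
  · rintro ⟨w, hw, a, ha, hcf, b, hb, ⟨hxw, rfl⟩, rfl⟩
    rw [ES.encSet_eq_encSet_iff hfin hx hw] at hxw
    exact ⟨ha, hxw ▸ hcf, hb⟩
  · rintro ⟨ha, hcf, hb⟩
    exact ⟨x, hx, a, ha, hcf, b, hb, ⟨rfl, rfl⟩, rfl⟩

lemma config_esSeq_image_union (hfin : E1.ev.Finite) (hx : x ∈ E1.MaxC) {y : Set ℕ}
    (hy : E2.Config y) : (esSeq E1 E2).Config (tagL '' x ∪ tagC (encSet x) '' y) := by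
  refine ⟨?_, ?_, ?_⟩
  · rintro u (⟨e, he, rfl⟩ | ⟨f, hf, rfl⟩)
    exacts [tagL_mem_esSeq_ev.2 (hx.1.subset_ev he), (tagC_mem_esSeq_ev hx).2 (hy.subset_ev hf)]
  · rintro u (⟨e, he, rfl⟩ | ⟨g, hg, rfl⟩) v hv hle <;>
      rcases mem_esSeq_ev.1 hv with ⟨a, ha, rfl⟩ | ⟨x', hx', a, ha, rfl⟩
    · exact Or.inl ⟨a, hx.1.mem_of_le he ha (esSeq_le_tagL_tagL.1 hle).2.2, rfl⟩
    · exact absurd hle esSeq_not_le_tagC_tagL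
    · exact Or.inl ⟨a, ((esSeq_le_tagL_tagC hfin hx).1 hle).1, rfl⟩
    · obtain ⟨rfl, -, -, hag⟩ := (esSeq_le_tagC_tagC hfin hx hx').1 hle
      exact Or.inr ⟨a, hy.mem_of_le hg ha hag, rfl⟩
  · rintro u (⟨e, he, rfl⟩ | ⟨g, hg, rfl⟩) v (⟨e', he', rfl⟩ | ⟨g', hg', rfl⟩) hc
    · exact hx.1.not_conf he he' (esSeq_conf_tagL_tagL.1 hc).2.2
    · obtain ⟨-, ⟨e'', he'', hc⟩, -⟩ := (esSeq_conf_tagL_tagC hfin hx).1 hc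
      exact hx.1.not_conf he he'' hc
    · obtain ⟨-, ⟨e'', he'', hc⟩, -⟩ := (esSeq_conf_tagC_tagL hfin hx).1 hc
      exact hx.1.not_conf he' he'' hc
    · obtain ⟨-, -, hne | hc⟩ := (esSeq_conf_tagC_tagC hfin hx hx).1 hc
      exacts [hne rfl, hy.not_conf hg hg' hc]

lemma config_esSeq_image_tagL {w : Set ℕ} (hw : E1.Config w) :
    (esSeq E1 E2).Config (tagL '' w) := by
  refine ⟨?_, ?_, ?_⟩
  · rintro u ⟨e, he, rfl⟩
    exact tagL_mem_esSeq_ev.2 (hw.subset_ev he)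
  · rintro u ⟨e, he, rfl⟩ v hv hle
    rcases mem_esSeq_ev.1 hv with ⟨a, ha, rfl⟩ | ⟨x', hx', a, ha, rfl⟩
    · exact ⟨a, hw.mem_of_le he ha (esSeq_le_tagL_tagL.1 hle).2.2, rfl⟩
    · exact absurd hle esSeq_not_le_tagC_tagL
  · rintro u ⟨e, he, rfl⟩ v ⟨e', he', rfl⟩ hc
    exact hw.not_conf he he' (esSeq_conf_tagL_tagL.1 hc).2.2

lemma ES.Config.preimage_tagL_of_esSeq {z : Set ℕ} (hz : (esSeq E1 E2).Config z) :
    E1.Config (tagL ⁻¹' z) := by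
  refine ⟨fun a ha => tagL_mem_esSeq_ev.1 (hz.subset_ev ha), fun a ha f hf hfa => ?_,
    fun a ha b hb hab => ?_⟩
  · exact hz.mem_of_le ha (tagL_mem_esSeq_ev.2 hf)
      (esSeq_le_tagL_tagL.2 ⟨hf, tagL_mem_esSeq_ev.1 (hz.subset_ev ha), hfa⟩)
  · exact hz.not_conf ha hb (esSeq_conf_tagL_tagL.2
      ⟨tagL_mem_esSeq_ev.1 (hz.subset_ev ha), tagL_mem_esSeq_ev.1 (hz.subset_ev hb), hab⟩)

lemma ES.Config.preimage_tagC_of_esSeq (hfin : E1.ev.Finite) (hx : x ∈ E1.MaxC) {z : Set ℕ}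
    (hz : (esSeq E1 E2).Config z) : E2.Config (tagC (encSet x) ⁻¹' z) := by
  have hev : ∀ a ∈ tagC (encSet x) ⁻¹' z, a ∈ E2.ev :=
    fun a ha => (tagC_mem_esSeq_ev hx).1 (hz.subset_ev ha)
  refine ⟨hev, fun a ha f hf hfa => ?_, fun a ha b hb hab => ?_⟩
  · exact hz.mem_of_le ha ((tagC_mem_esSeq_ev hx).2 hf)
      ((esSeq_le_tagC_tagC hfin hx hx).2 ⟨rfl, hf, hev a ha, hfa⟩)
  · exact hz.not_conf ha hb
      ((esSeq_conf_tagC_tagC hfin hx hx).2 ⟨hev a ha, hev b hb, Or.inr hab⟩)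

lemma mem_maxC_esSeq (hfin : E1.ev.Finite) (hx : x ∈ E1.MaxC) {y : Set ℕ} (hy : y ∈ E2.MaxC)
    (hy' : y.Nonempty ∨ E2.ev = ∅) :
    tagL '' x ∪ tagC (encSet x) '' y ∈ (esSeq E1 E2).MaxC := by
  refine ⟨config_esSeq_image_union hfin hx hy.1, fun z hz hsub => hsub.antisymm' ?_⟩
  rw [Set.union_subset_iff, Set.image_subset_iff, Set.image_subset_iff] at hsub
  have hzx : tagL ⁻¹' z = x := hx.2 _ hz.preimage_tagL_of_esSeq hsub.1
  have hzy : tagC (encSet x) ⁻¹' z = y := hy.2 _ (hz.preimage_tagC_of_esSeq hfin hx) hsub.2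
  intro u hu
  rcases mem_esSeq_ev.1 (hz.subset_ev hu) with ⟨e, -, rfl⟩ | ⟨x', hx', f, hf, rfl⟩
  · exact Or.inl ⟨e, hzx ▸ hu, rfl⟩
  · obtain rfl : x' = x := by
      rcases hy' with ⟨g, hg⟩ | hE2
      · by_contra hne
        exact hz.not_conf hu (hsub.2 hg) ((esSeq_conf_tagC_tagC hfin hx' hx).2
          ⟨hf, hy.1.subset_ev hg, Or.inl hne⟩)
      · exact absurd hf (hE2 ▸ Set.notMem_empty f)
    exact Or.inr ⟨f, hzy ▸ hu, rfl⟩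

lemma eq_image_union_of_tagC_mem_maxC_esSeq (hfin : E1.ev.Finite)
    (hsymm : ∀ a b, E1.conf a b → E1.conf b a) {z : Set ℕ} (hz : z ∈ (esSeq E1 E2).MaxC)
    (hx : x ∈ E1.MaxC) {f : ℕ} (hf : f ∈ E2.ev) (hfz : tagC (encSet x) f ∈ z) :
    tagC (encSet x) ⁻¹' z ∈ E2.MaxC ∧
      z = tagL '' x ∪ tagC (encSet x) '' (tagC (encSet x) ⁻¹' z) := by
  have hzL : tagL ⁻¹' z ⊆ x := by
    have hcross : ∀ e ∈ tagL ⁻¹' z, ∀ e' ∈ x, ¬ E1.conf e e' := fun e he e' he' hc =>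
      hz.1.not_conf he hfz ((esSeq_conf_tagL_tagC hfin hx).2
        ⟨tagL_mem_esSeq_ev.1 (hz.1.subset_ev he), ⟨e', he', hc⟩, hf⟩)
    have hunion := hz.1.preimage_tagL_of_esSeq.union hx.1
      fun e he e' he' => ⟨hcross e he e' he', fun hc => hcross e he e' he' (hsymm _ _ hc)⟩
    exact (hx.2 _ hunion Set.subset_union_right).le.trans' Set.subset_union_left
  have hzsub : z ⊆ tagL '' x ∪ tagC (encSet x) '' (tagC (encSet x) ⁻¹' z) := by
    intro u hu
    rcases mem_esSeq_ev.1 (hz.1.subset_ev hu) with ⟨e, -, rfl⟩ | ⟨x', hx', g, hg, rfl⟩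
    · exact Or.inl ⟨e, hzL hu, rfl⟩
    · obtain rfl : x' = x := by
        by_contra hne
        exact hz.1.not_conf hu hfz ((esSeq_conf_tagC_tagC hfin hx' hx).2 ⟨hg, hf, Or.inl hne⟩)
      exact Or.inr ⟨g, hu, rfl⟩
  have hyc := hz.1.preimage_tagC_of_esSeq hfin hx
  refine ⟨⟨hyc, fun y' hy' hsub => hsub.antisymm' fun g hg => ?_⟩,
    (hz.2 _ (config_esSeq_image_union hfin hx hyc) hzsub).symm⟩
  have := hz.2 _ (config_esSeq_image_union hfin hx hy')
    (hzsub.trans (Set.union_subset_union_right _ (Set.image_mono hsub)))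
  exact this.le (Or.inr ⟨g, hg, rfl⟩)

lemma exists_eq_image_union_of_mem_maxC_esSeq (hfin : E1.ev.Finite)
    (hsymm : ∀ a b, E1.conf a b → E1.conf b a) (hE2 : E2.MaxC.Nonempty)
    {z : Set ℕ} (hz : z ∈ (esSeq E1 E2).MaxC) :
    ∃ x ∈ E1.MaxC, ∃ y ∈ E2.MaxC, z = tagL '' x ∪ tagC (encSet x) '' y := by
  by_cases hcopy : ∃ x ∈ E1.MaxC, ∃ f ∈ E2.ev, tagC (encSet x) f ∈ z
  · obtain ⟨x, hx, f, hf, hfz⟩ := hcopy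
    obtain ⟨hy, hzeq⟩ := eq_image_union_of_tagC_mem_maxC_esSeq hfin hsymm hz hx hf hfz
    exact ⟨x, hx, _, hy, hzeq⟩
  push Not at hcopy
  have hzrep : z = tagL '' (tagL ⁻¹' z) := by
    refine (Set.image_preimage_subset _ _).antisymm' fun u hu => ?_
    rcases mem_esSeq_ev.1 (hz.1.subset_ev hu) with ⟨e, -, rfl⟩ | ⟨x', hx', g, hg, rfl⟩
    exacts [⟨e, hu, rfl⟩, absurd hu (hcopy x' hx' g hg)]
  have hx : tagL ⁻¹' z ∈ E1.MaxC := by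
    refine ⟨hz.1.preimage_tagL_of_esSeq, fun w hw hsub => hsub.antisymm' fun e he => ?_⟩
    have := hz.2 _ (config_esSeq_image_tagL (E2 := E2) hw) (hzrep.le.trans (Set.image_mono hsub))
    exact this.le ⟨e, he, rfl⟩
  obtain ⟨y, hy⟩ := hE2
  exact ⟨_, hx, y, hy,
    (hz.2 _ (config_esSeq_image_union hfin hx hy.1) (hzrep.le.trans Set.subset_union_left)).symm⟩

lemma lblSet_esSeq (hE1 : E1.MaxC.Nonempty) :
    (esSeq E1 E2).lblSet = E1.lblSet ∪ E2.lblSet := by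
  obtain ⟨x, hx⟩ := hE1
  ext l
  simp only [ES.lblSet, Set.mem_image, Set.mem_union, mem_esSeq_ev]
  constructor
  · rintro ⟨u, ⟨e, he, rfl⟩ | ⟨x', -, f, hf, rfl⟩, rfl⟩
    exacts [Or.inl ⟨e, he, by simp⟩, Or.inr ⟨f, hf, by simp⟩]
  · rintro (⟨e, he, rfl⟩ | ⟨f, hf, rfl⟩)
    exacts [⟨tagL e, Or.inl ⟨e, he, rfl⟩, by simp⟩,
      ⟨tagC (encSet x) f, Or.inr ⟨x, hx, f, hf, rfl⟩, by simp⟩]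

lemma minLblP_esSeq_of_forall_exists (hfin : E1.ev.Finite) {A : P}
    (hA : ∀ x ∈ E1.MaxC, ∃ e ∈ x, (E1.lbl e).sbj = A) :
    minLblP (esSeq E1 E2) A = minLblP E1 A := by
  have htagL : ∀ {a}, tagL a ∈ ((esSeq E1 E2).proj A).minEv ↔ a ∈ (E1.proj A).minEv := by
    refine ES.map_mem_minEv_proj_iff tagL_injective (fun _ => esSeq_lbl_tagL)
      (fun _ => tagL_mem_esSeq_ev) (by simp +contextual) fun e _ u hu _ hle => ?_
    rcases mem_esSeq_ev.1 hu with ⟨f, hf, rfl⟩ | ⟨x, -, f, -, rfl⟩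
    exacts [⟨f, hf, rfl⟩, absurd hle esSeq_not_le_tagC_tagL]
  ext l
  simp only [minLblP_eq_image, Set.mem_image]
  constructor
  · rintro ⟨u, hu, rfl⟩
    obtain ⟨huev, huA, hmin⟩ := ES.mem_minEv_proj.1 hu
    rcases mem_esSeq_ev.1 huev with ⟨e, -, rfl⟩ | ⟨x, hx, f, hf, rfl⟩
    · exact ⟨e, htagL.1 hu, by simp⟩
    · -- a copy event is not minimal: the `A`-event of `x` lies below it
      obtain ⟨e, he, heA⟩ := hA x hx
      rw [esSeq_lbl_tagC] at huA
      have := hmin (tagL e) (tagL_mem_esSeq_ev.2 (hx.1.subset_ev he)) (by simpa)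
        ((esSeq_le_tagL_tagC hfin hx).2 ⟨he, hf, heA.trans huA.symm⟩)
      exact absurd this (tagL_ne_tagC _ _ _)
  · rintro ⟨e, he, rfl⟩
    exact ⟨tagL e, htagL.2 he, by simp⟩

lemma minLblP_esSeq_of_forall_ne (hfin : E1.ev.Finite) (hE1 : E1.MaxC.Nonempty) {A : P}
    (hA : ∀ e ∈ E1.ev, (E1.lbl e).sbj ≠ A) :
    minLblP (esSeq E1 E2) A = minLblP E2 A := by
  have htagC : ∀ {x a}, x ∈ E1.MaxC →
      (tagC (encSet x) a ∈ ((esSeq E1 E2).proj A).minEv ↔ a ∈ (E2.proj A).minEv) := by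
    intro x a hx
    refine ES.map_mem_minEv_proj_iff (fun _ _ h => (tagC_inj.1 h).2) (fun _ => esSeq_lbl_tagC)
      (fun _ => tagC_mem_esSeq_ev hx) (fun e he f hf => ?_) fun e _ u hu huA hle => ?_
    · simp [esSeq_le_tagC_tagC hfin hx hx, he, hf]
    rcases mem_esSeq_ev.1 hu with ⟨f, hf, rfl⟩ | ⟨x', hx', f, hf, rfl⟩
    · exact absurd (by simpa using huA) (hA f hf)
    · obtain ⟨rfl, -⟩ := (esSeq_le_tagC_tagC hfin hx hx').1 hle
      exact ⟨f, hf, rfl⟩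
  ext l
  simp only [minLblP_eq_image, Set.mem_image]
  constructor
  · rintro ⟨u, hu, rfl⟩
    obtain ⟨huev, huA, -⟩ := ES.mem_minEv_proj.1 hu
    rcases mem_esSeq_ev.1 huev with ⟨e, he, rfl⟩ | ⟨x, hx, f, -, rfl⟩
    · exact absurd (by simpa using huA) (hA e he)
    · exact ⟨f, (htagC hx).1 hu, by simp⟩
  · rintro ⟨f, hf, rfl⟩
    obtain ⟨x, hx⟩ := hE1
    exact ⟨tagC (encSet x) f, (htagC hx).2 hf, by simp⟩

lemma finite_esSeq_ev (hfin1 : E1.ev.Finite) (hfin2 : E2.ev.Finite) :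
    (esSeq E1 E2).ev.Finite := by
  have hmaxfin : E1.MaxC.Finite := hfin1.finite_subsets.subset fun x hx => hx.1.subset_ev
  refine (hfin1.image _).union
    ((hmaxfin.image2 (fun x e => tagC (encSet x) e) hfin2).subset ?_)
  rintro u ⟨x, hx, e, he, rfl⟩
  exact Set.mem_image2_of_mem hx he

lemma esSeq_conf_symm (hsymm1 : ∀ a b, E1.conf a b → E1.conf b a)
    (hsymm2 : ∀ a b, E2.conf a b → E2.conf b a) {u v : ℕ} (huv : (esSeq E1 E2).conf u v) :
    (esSeq E1 E2).conf v u := by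
  rcases huv with ⟨a, ha, b, hb, hab, rfl, rfl⟩ | ⟨x, hx, a, ha, b, hb, hab, rfl, rfl⟩ |
      ⟨x, hx, x', hx', hne, a, ha, b, hb, rfl, rfl⟩ |
      ⟨x, hx, a, ha, hcf, b, hb, ⟨rfl, rfl⟩ | ⟨rfl, rfl⟩⟩
  · exact Or.inl ⟨b, hb, a, ha, hsymm1 _ _ hab, rfl, rfl⟩
  · exact Or.inr (Or.inl ⟨x, hx, b, hb, a, ha, hsymm2 _ _ hab, rfl, rfl⟩)
  · exact Or.inr (Or.inr (Or.inl ⟨x', hx', x, hx, hne.symm, b, hb, a, ha, rfl, rfl⟩))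
  · exact Or.inr (Or.inr (Or.inr ⟨x, hx, a, ha, hcf, b, hb, Or.inr ⟨rfl, rfl⟩⟩))
  · exact Or.inr (Or.inr (Or.inr ⟨x, hx, a, ha, hcf, b, hb, Or.inl ⟨rfl, rfl⟩⟩))

lemma Realizes.esSeq {Γ1 Γ2 : Set P} {φ1 φ2 : Set (Label P M)}
    (h1 : Realizes Γ1 φ1 E1) (h2 : Realizes Γ2 φ2 E2) :
    Realizes (Γ1 ∪ Γ2) (φ1 ∪ lminus φ2 Γ1) (esSeq E1 E2) := by
  have hfin := h1.finite_ev
  refine ⟨finite_esSeq_ev hfin h2.finite_ev, ?_, fun A => ?_, ?_, ?_,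
    fun _ _ => esSeq_conf_symm h1.conf_symm h2.conf_symm⟩
  · rw [lblSet_esSeq h1.maxC_nonempty, sbjSet_union, h1.sbjSet_lblSet, h2.sbjSet_lblSet]
  · rw [hat_union]
    by_cases hA : A ∈ Γ1
    · rw [hat_lminus_of_mem _ hA, Set.union_empty, ← h1.minLblP_eq_hat]
      exact minLblP_esSeq_of_forall_exists hfin (h1.exists_sbj_eq_of_mem_maxC A hA)
    · rw [h1.hat_eq_empty hA, Set.empty_union, hat_lminus_of_notMem _ hA, ← h2.minLblP_eq_hat]
      exact minLblP_esSeq_of_forall_ne hfin h1.maxC_nonempty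
        fun e he heA => hA (heA ▸ h1.sbj_mem he)
  · obtain ⟨x, hx⟩ := h1.maxC_nonempty
    obtain ⟨y, hy⟩ := h2.maxC_nonempty
    exact ⟨_, mem_maxC_esSeq hfin hx hy (h2.nonempty_or_ev_eq_empty hy)⟩
  · intro A hA z hz
    obtain ⟨x, hx, y, hy, rfl⟩ :=
      exists_eq_image_union_of_mem_maxC_esSeq hfin h1.conf_symm h2.maxC_nonempty hz
    rcases hA with hA | hA
    · obtain ⟨e, he, heA⟩ := h1.exists_sbj_eq_of_mem_maxC A hA x hx
      exact ⟨tagL e, Or.inl ⟨e, he, rfl⟩, by simpa⟩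
    · obtain ⟨f, hf, hfA⟩ := h2.exists_sbj_eq_of_mem_maxC A hA y hy
      exact ⟨tagC (encSet x) f, Or.inr ⟨f, hf, rfl⟩, by simpa⟩

end Seq

theorem Typing.realizes [Nonempty P] [Nonempty M] {Γ : Set P} {G : GC P M}
    {φ Λ : Set (Label P M)} (h : Typing Γ G φ Λ) : ∃ E, gsem G = some E ∧ Realizes Γ φ E := by
  induction h with
  | temp => exact ⟨esEmpty, rfl, realizes_esEmpty⟩
  | tint hab => exact ⟨_, by simp [gsem, hab], realizes_esAct _ hab⟩
  | tseq _ _ ih1 ih2 =>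
    obtain ⟨E1, hE1, h1⟩ := ih1
    obtain ⟨E2, hE2, h2⟩ := ih2
    exact ⟨_, by simp [gsem, hE1, hE2], h1.esSeq h2⟩
  | tpar _ _ hΓ ih1 ih2 =>
    obtain ⟨E1, hE1, h1⟩ := ih1
    obtain ⟨E2, hE2, h2⟩ := ih2
    exact ⟨_, by simp [gsem, hE1, hE2, h1.disjoint_lblSet h2 hΓ], h1.esTensor h2⟩
  | tch _ _ hc ih1 ih2 =>
    obtain ⟨E1, hE1, h1⟩ := ih1
    obtain ⟨E2, hE2, h2⟩ := ih2
    exact ⟨_, by simp [gsem, hE1, hE2, wb_of_compch h1 h2 hc], h1.esSum h2⟩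

theorem Typing.gsem_ne_none [Nonempty P] [Nonempty M] {Γ : Set P} {G : GC P M}
    {φ Λ : Set (Label P M)} (h : Typing Γ G φ Λ) : gsem G ≠ none := by
  obtain ⟨E, hE, -⟩ := h.realizes
  simp [hE]

theorem CTyping.typing_fill {Γh : Set P} {φh Λh : Set (Label P M)} {Γ : Set P} {C : Ctx P M}
    {φ Λ : Set (Label P M)} (hC : CTyping Γh φh Λh Γ C φ Λ) {G : GC P M}
    (hG : Typing Γh G φh Λh) : Typing Γ (C.fill G) φ Λ := by
  induction hC with
  | hole => exact hG
  | seqL _ h2 ih => exact ih.tseq h2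
  | seqR h1 _ ih => exact h1.tseq ih
  | parL _ h2 hΓ ih => exact ih.tpar h2 hΓ
  | parR h1 _ hΓ ih => exact h1.tpar ih hΓ
  | choL _ h2 hc ih => exact ih.tch h2 hc
  | choR h1 _ hc ih => exact h1.tch ih hc

/-- Compositionality of typing with respect to one-hole contexts: if
`Π' ⊢ G'[·] : ⟨φ',Λ'⟩` is derivable in the system extended with the hole axiom
`Π ⊢ [·] : ⟨φ,Λ⟩`, then for every ground `G` with `Π ⊢ G : ⟨φ,Λ⟩` derivable,
`Π' ⊢ G'[G] : ⟨φ',Λ'⟩` is derivable and `⟦G'[G]⟧ ≠ ⊥`. -/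
theorem compositionality {P M : Type} [Infinite P] [Infinite M]
    {Γh : Set P} {φh Λh : Set (Label P M)}
    {Γ' : Set P} {C : Ctx P M} {φ' Λ' : Set (Label P M)}
    (hC : CTyping Γh φh Λh Γ' C φ' Λ') :
    ∀ G : GC P M, Typing Γh G φh Λh →
      Typing Γ' (C.fill G) φ' Λ' ∧ gsem (C.fill G) ≠ none := fun _ hG =>
  ⟨hC.typing_fill hG, (hC.typing_fill hG).gsem_ne_none⟩

end Choreo
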